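/- If E‖X‖⁴ < ∞, then for independent X, X₁, X₂, X₃, X₄ with distribution F, the double centered distance satisfies E[d(X₁,X) · d(X₂,X) · d(X₃,X) · d(X₄,X)] = 0. -/

import Mathlib

open MeasureTheory ProbabilityTheory

/-!
Conditionally on `X, X₂, X₃, X₄`, only the factor `d(X₁, X)` depends on `X₁`, which is independent
of them with law `F`. By Fubini the expectation is therefore an average of
`(∫ d(y, x) dF(y)) · d(x₂, x) d(x₃, x) d(x₄, x)`, and `∫ d(y, x) dF(y) = g(x) - Δ - g(x) + Δ = 0`
because `∫ g dF = Δ`.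
-/

theorem ProbabilityTheory.IndepFun.integral_comp_eq_zero_of_forall_integral_eq_zero
    {Ω α β E : Type*} [MeasurableSpace Ω] [MeasurableSpace α] [MeasurableSpace β]
    [NormedAddCommGroup E] [NormedSpace ℝ E] {μ : Measure Ω} [IsFiniteMeasure μ]
    {Y : Ω → α} {Z : Ω → β} (hYZ : IndepFun Y Z μ) (hY : AEMeasurable Y μ)
    (hZ : AEMeasurable Z μ) {k : α → β → E}
    (hk : AEStronglyMeasurable (Function.uncurry k) ((μ.map Y).prod (μ.map Z)))
    (h0 : ∀ z, ∫ y, k y z ∂(μ.map Y) = 0) :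
    ∫ ω, k (Y ω) (Z ω) ∂μ = 0 := by
  have hmap := (indepFun_iff_map_prod_eq_prod_map_map hY hZ).1 hYZ
  calc ∫ ω, k (Y ω) (Z ω) ∂μ
      = ∫ q, Function.uncurry k q ∂((μ.map Y).prod (μ.map Z)) := by
        rw [← hmap, integral_map (hY.prodMk hZ) (hmap ▸ hk)]
        rfl
    _ = 0 := by
        by_cases hint : Integrable (Function.uncurry k) ((μ.map Y).prod (μ.map Z))
        · simp [integral_prod_symm _ hint, h0]
        · exact integral_undef hint

section DoubleCentering

variable {E : Type*} [NormedAddCommGroup E] [MeasurableSpace E] [SecondCountableTopology E]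
  {F : Measure E}

noncomputable def meanDist (F : Measure E) (x : E) : ℝ := ∫ y, ‖y - x‖ ∂F

noncomputable def doubleCenteredDist (F : Measure E) (x₁ x₂ : E) : ℝ :=
  ‖x₁ - x₂‖ - meanDist F x₁ - meanDist F x₂ + ∫ x, meanDist F x ∂F

theorem measurable_meanDist [BorelSpace E] [SFinite F] : Measurable (meanDist F) :=
  ((continuous_snd.sub continuous_fst).norm.stronglyMeasurable.integral_prod_right'
    (ν := F)).measurable

theorem measurable_doubleCenteredDist [BorelSpace E] [SFinite F] :
    Measurable fun q : E × E => doubleCenteredDist F q.1 q.2 :=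
  (((measurable_fst.sub measurable_snd).norm.sub (measurable_meanDist.comp measurable_fst)).sub
    (measurable_meanDist.comp measurable_snd)).add_const _

theorem integrable_meanDist [IsFiniteMeasure F] (hF : Integrable id F) :
    Integrable (meanDist F) F :=
  ((hF.comp_snd F).sub (hF.comp_fst F)).norm.integral_prod_left

theorem integral_doubleCenteredDist_left [IsProbabilityMeasure F] (hF : Integrable id F)
    (x : E) : ∫ y, doubleCenteredDist F y x ∂F = 0 := by
  have hx : Integrable (fun y => ‖y - x‖) F := (hF.sub (integrable_const x)).norm
  have hm := integrable_meanDist hF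
  simp only [doubleCenteredDist]
  rw [integral_add ?_ (integrable_const _), integral_sub ?_ (integrable_const _),
    integral_sub hx hm]
  · simp [meanDist]
  · exact hx.sub hm
  · exact (hx.sub hm).sub (integrable_const _)

end DoubleCentering

theorem gini_double_centered_fourth_orthogonal_general
    {Ω : Type*} [MeasurableSpace Ω] (μ : Measure Ω) [IsProbabilityMeasure μ]
    (p : ℕ) (F : Measure (EuclideanSpace ℝ (Fin p))) [IsProbabilityMeasure F]
    (X X₁ X₂ X₃ X₄ : Ω → EuclideanSpace ℝ (Fin p))
    (hX : Measurable X) (hX₁ : Measurable X₁) (hX₂ : Measurable X₂)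
    (hX₃ : Measurable X₃) (hX₄ : Measurable X₄)
    (hX₁F : μ.map X₁ = F)
    (hindep : iIndepFun ![X, X₁, X₂, X₃, X₄] μ)
    (hmom : Integrable (fun x => ‖x‖ ^ 4) F)
    (Δ : ℝ) (hΔ : Δ = ∫ x, ∫ y, ‖x - y‖ ∂F ∂F)
    (g : EuclideanSpace ℝ (Fin p) → ℝ) (hg : ∀ x, g x = ∫ y, ‖y - x‖ ∂F)
    (d : EuclideanSpace ℝ (Fin p) → EuclideanSpace ℝ (Fin p) → ℝ)
    (hd : ∀ x₁ x₂, d x₁ x₂ = ‖x₁ - x₂‖ - g x₁ - g x₂ + Δ) :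
    ∫ ω, d (X₁ ω) (X ω) * d (X₂ ω) (X ω) * d (X₃ ω) (X ω) * d (X₄ ω) (X ω) ∂μ = 0 := by
  have hF : Integrable id F := (integrable_norm_iff aestronglyMeasurable_id).1 <| by
    simpa using integrable_norm_pow_of_le aestronglyMeasurable_id (p := 1) (by norm_num) hmom
  obtain rfl : d = doubleCenteredDist F := by
    ext x₁ x₂
    simp only [hd, hg, hΔ, doubleCenteredDist, meanDist, norm_sub_rev]
  have hmeas : ∀ i, Measurable (![X, X₁, X₂, X₃, X₄] i) := by
    intro i; fin_cases i <;> assumption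
  have hX₁_indep : IndepFun X₁ (fun ω => (X ω, X₂ ω, X₃ ω, X₄ ω)) μ := by
    have h := hindep.indepFun_finset {1} {0, 2, 3, 4} (by decide) hmeas
    refine h.comp (φ := fun v => v ⟨1, by simp⟩)
      (ψ := fun v => (v ⟨0, by simp⟩, v ⟨2, by simp⟩, v ⟨3, by simp⟩, v ⟨4, by simp⟩)) ?_ ?_ <;>
    fun_prop
  refine hX₁_indep.integral_comp_eq_zero_of_forall_integral_eq_zero hX₁.aemeasurable
    (by fun_prop) (k := fun y z => doubleCenteredDist F y z.1 * doubleCenteredDist F z.2.1 z.1 *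
      doubleCenteredDist F z.2.2.1 z.1 * doubleCenteredDist F z.2.2.2 z.1) ?_ fun z => ?_
  · have hdist := measurable_doubleCenteredDist (F := F)
    exact Measurable.aestronglyMeasurable (by fun_prop)
  · simp [hX₁F, integral_mul_const, integral_doubleCenteredDist_left hF]

/-- If `E‖X‖⁴ < ∞`, then for independent `X, X₁, X₂, X₃, X₄` with
distribution `F`, the double centered distance satisfies
`E[d(X₁,X) · d(X₂,X) · d(X₃,X) · d(X₄,X)] = 0`. -/
theorem gini_double_centered_fourth_orthogonal
    {Ω : Type*} [MeasurableSpace Ω] (μ : Measure Ω) [IsProbabilityMeasure μ]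
    (p : ℕ) (F : Measure (EuclideanSpace ℝ (Fin p))) [IsProbabilityMeasure F]
    (X X₁ X₂ X₃ X₄ : Ω → EuclideanSpace ℝ (Fin p))
    (hX : Measurable X) (hX₁ : Measurable X₁) (hX₂ : Measurable X₂)
    (hX₃ : Measurable X₃) (hX₄ : Measurable X₄)
    (hXF : μ.map X = F) (hX₁F : μ.map X₁ = F) (hX₂F : μ.map X₂ = F)
    (hX₃F : μ.map X₃ = F) (hX₄F : μ.map X₄ = F)
    (hindep : iIndepFun ![X, X₁, X₂, X₃, X₄] μ)
    (hmom : Integrable (fun x => ‖x‖ ^ 4) F)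
    (Δ : ℝ) (hΔ : Δ = ∫ x, ∫ y, ‖x - y‖ ∂F ∂F)
    (g : EuclideanSpace ℝ (Fin p) → ℝ) (hg : ∀ x, g x = ∫ y, ‖y - x‖ ∂F)
    (d : EuclideanSpace ℝ (Fin p) → EuclideanSpace ℝ (Fin p) → ℝ)
    (hd : ∀ x₁ x₂, d x₁ x₂ = ‖x₁ - x₂‖ - g x₁ - g x₂ + Δ) :
    ∫ ω, d (X₁ ω) (X ω) * d (X₂ ω) (X ω) * d (X₃ ω) (X ω) * d (X₄ ω) (X ω) ∂μ = 0 :=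
  gini_double_centered_fourth_orthogonal_general μ p F X X₁ X₂ X₃ X₄ hX hX₁ hX₂ hX₃ hX₄ hX₁F hindep
    hmom Δ hΔ g hg d hd
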